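/- Let H be a real Hilbert space, C ⊆ H a nonempty closed r-prox-regular set (r > 0), and V : H → ℝ a differentiable function with Lipschitz continuous gradient ∇V. Let x(·) be the unique locally absolutely continuous solution of ẋ(t) ∈ −∇V(x(t)) − N(C, x(t)) a.e. on [0,∞) with x(0) = x₀ ∈ C. If V is bounded from below on C, then the limit V_∞ = lim_{t→+∞} V(x(t)) exists, ẋ ∈ L²([0,+∞); H), and ∫₀^{+∞} ‖ẋ(s)‖² ds = V(x₀) − V_∞. -/

import Mathlib

/-!
Along a solution, `ẋ(t)` is the velocity of a curve that stays in `C`, so it is orthogonal to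
every proximal normal at `x(t)`; the inclusion `-∇V(x) - ẋ ∈ N(C, x)` then gives
`⟪∇V(x(t)), ẋ(t)⟫ = -‖ẋ(t)‖²` for a.e. `t`. As `V` is Lipschitz on bounded sets and `x` is
absolutely continuous, so is `t ↦ V(x(t))`, and the fundamental theorem of calculus yields
`V(x(t)) + ∫₀ᵗ ‖ẋ‖² = V(x₀)`. The lower bound of `V` on `C` bounds these increasing integrals,
so `‖ẋ‖²` is integrable on `[0, ∞)` and `V(x(t))` converges to `V(x₀) - ∫₀^∞ ‖ẋ‖²`.
-/

open Set Filter Metric MeasureTheory Topology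
open scoped RealInnerProductSpace NNReal ENNReal

variable {H : Type*} [NormedAddCommGroup H] [InnerProductSpace ℝ H] [CompleteSpace H]

/-- The proximal normal cone of a set `C` at a point `x`:
`ξ ∈ N(C,x)` iff there exist `σ > 0`, `δ > 0` with
`⟪ξ, y - x⟫ ≤ δ ‖y - x‖²` for all `y ∈ C` with `‖y - x‖ ≤ σ`. -/
def proxNormalCone (C : Set H) (x : H) : Set H :=
  {ξ | ∃ σ > (0 : ℝ), ∃ δ > (0 : ℝ), ∀ y ∈ C, ‖y - x‖ ≤ σ → ⟪ξ, y - x⟫ ≤ δ * ‖y - x‖ ^ 2}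

/-- `C` is `r`-prox-regular: every point `s` with `d(s,C) < r` has a unique
nearest point `p s` in `C`, and the nearest-point map `p` is continuous on
the enlargement `U_r(C) = {s | d(s,C) < r}`. -/
def IsProxRegular (C : Set H) (r : ℝ) : Prop :=
  ∃ p : H → H,
    (∀ s : H, infDist s C < r →
      (p s ∈ C ∧ dist s (p s) = infDist s C) ∧
      ∀ y ∈ C, dist s y = infDist s C → y = p s) ∧
    ContinuousOn p {s : H | infDist s C < r}

/-- The set `f(x) - N(C,x)`. -/
def flowSet (C : Set H) (f : H → H) (x : H) : Set H :=
  {v | f x - v ∈ proxNormalCone C x}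

/-- `x : ℝ → H` is the (locally absolutely continuous) solution of the differential
inclusion `ẋ(t) ∈ f(x(t)) - N(C, x(t))` a.e. on `[0, ∞)`, `x(0) = x₀`, with a.e.
derivative `x'`: it starts at `x₀`, stays in `C`, is a locally Bochner integral of
`x'` (local absolute continuity), has derivative `x' t` at a.e. `t ≥ 0`, and
satisfies the inclusion at a.e. `t ≥ 0`. -/
structure IsSolutionOf (C : Set H) (f : H → H) (x₀ : H) (x x' : ℝ → H) : Prop where
  init : x 0 = x₀
  memC : ∀ t ≥ (0 : ℝ), x t ∈ C
  locInt : ∀ T > (0 : ℝ), IntegrableOn x' (Icc 0 T)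
  integ : ∀ t ≥ (0 : ℝ), x t = x₀ + ∫ s in (0 : ℝ)..t, x' s
  deriv : ∀ᵐ t ∂(volume.restrict (Ici (0 : ℝ))), HasDerivAt x (x' t) t
  incl : ∀ᵐ t ∂(volume.restrict (Ici (0 : ℝ))), x' t ∈ flowSet C f (x t)

open scoped Interval

namespace AbsolutelyContinuousOnInterval

variable {X Y : Type*} [PseudoMetricSpace X] [PseudoMetricSpace Y] {a b : ℝ}

theorem of_dist_le_mul {f : ℝ → X} {g : ℝ → Y} {K : ℝ}
    (hg : AbsolutelyContinuousOnInterval g a b)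
    (hfg : ∀ u ∈ uIcc a b, ∀ v ∈ uIcc a b, dist (f u) (f v) ≤ K * dist (g u) (g v)) :
    AbsolutelyContinuousOnInterval f a b := by
  unfold AbsolutelyContinuousOnInterval at hg ⊢
  refine squeeze_zero' (.of_forall fun _ ↦ Finset.sum_nonneg fun _ _ ↦ dist_nonneg) ?_
    (by simpa using hg.const_mul K)
  rw [eventually_inf_principal]
  filter_upwards with ⟨n, I⟩ hnI
  rw [Finset.mul_sum]
  exact Finset.sum_le_sum fun i hi ↦ hfg _ (hnI.1 i hi).1 _ (hnI.1 i hi).2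

theorem _root_.LipschitzOnWith.comp_absolutelyContinuousOnInterval {φ : X → Y} {f : ℝ → X}
    {s : Set X} {K : ℝ≥0} (hφ : LipschitzOnWith K φ s) (hf : AbsolutelyContinuousOnInterval f a b)
    (hfs : MapsTo f (uIcc a b) s) : AbsolutelyContinuousOnInterval (fun t ↦ φ (f t)) a b :=
  hf.of_dist_le_mul fun _ hu _ hv ↦ hφ.dist_le_mul _ (hfs hu) _ (hfs hv)

theorem of_eq_add_intervalIntegral {E : Type*} [NormedAddCommGroup E] [NormedSpace ℝ E]
    {F f : ℝ → E} (hf : IntervalIntegrable f volume a b)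
    (hF : ∀ s ∈ uIcc a b, F s = F a + ∫ v in a..s, f v) :
    AbsolutelyContinuousOnInterval F a b := by
  refine (hf.norm.absolutelyContinuousOnInterval_intervalIntegral left_mem_uIcc).of_dist_le_mul
    (K := 1) fun u hu v hv ↦ ?_
  have hfu := hf.mono_set (uIcc_subset_uIcc left_mem_uIcc hu)
  have hfv := hf.mono_set (uIcc_subset_uIcc left_mem_uIcc hv)
  rw [one_mul, hF u hu, hF v hv, dist_add_left, dist_eq_norm, Real.dist_eq,
    intervalIntegral.integral_interval_sub_left hfu hfv,
    intervalIntegral.integral_interval_sub_left hfu.norm hfv.norm]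
  exact intervalIntegral.norm_integral_le_abs_integral_norm

theorem intervalIntegrable_of_ae_hasDerivAt {f g : ℝ → ℝ}
    (hf : AbsolutelyContinuousOnInterval f a b)
    (hg : ∀ᵐ s ∂(volume.restrict (Ι a b)), HasDerivAt f (g s) s) :
    IntervalIntegrable g volume a b :=
  hf.intervalIntegrable_deriv.congr_ae (hg.mono fun _ hs ↦ hs.deriv)

theorem integral_eq_sub_of_ae_hasDerivAt {f g : ℝ → ℝ}
    (hf : AbsolutelyContinuousOnInterval f a b)
    (hg : ∀ᵐ s ∂(volume.restrict (Ι a b)), HasDerivAt f (g s) s) :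
    ∫ s in a..b, g s = f b - f a := by
  rw [← hf.integral_deriv_eq_sub]
  exact intervalIntegral.integral_congr_ae_restrict (hg.mono fun _ hs ↦ hs.deriv.symm)

end AbsolutelyContinuousOnInterval

theorem integrableOn_Ioi_of_intervalIntegral_le {f : ℝ → ℝ} {a B : ℝ}
    (hf : ∀ t, a ≤ t → IntervalIntegrable f volume a t) (hf₀ : 0 ≤ f)
    (hB : ∀ t, a ≤ t → ∫ s in a..t, f s ≤ B) : IntegrableOn f (Ioi a) := by
  have hle : ∀ n : ℕ, a ≤ a + n := fun n ↦ le_add_of_nonneg_right n.cast_nonneg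
  refine integrableOn_Ioi_of_intervalIntegral_norm_bounded B a (b := fun n : ℕ ↦ a + n)
    (fun n ↦ (intervalIntegrable_iff_integrableOn_Ioc_of_le (hle n)).1 (hf _ (hle n)))
    (tendsto_atTop_add_const_left _ a tendsto_natCast_atTop_atTop) (.of_forall fun n ↦ ?_)
  simpa only [Real.norm_of_nonneg (hf₀ _)] using hB _ (hle n)

section InnerProductSpace

variable {E : Type*} [NormedAddCommGroup E] [InnerProductSpace ℝ E]
  {C : Set E} {f : E → E} {x₀ : E} {x x' : ℝ → E}

/-- Proximal normality makes `s ↦ ⟪ξ, u s - u t⟫ - δ ‖u s - u t‖²` locally maximal at `t`. -/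
theorem inner_eq_zero_of_mem_proxNormalCone {u : ℝ → E} {u' ξ : E} {t : ℝ}
    (hξ : ξ ∈ proxNormalCone C (u t)) (hu : HasDerivAt u u' t) (hC : ∀ᶠ s in 𝓝 t, u s ∈ C) :
    ⟪ξ, u'⟫ = 0 := by
  obtain ⟨σ, hσ, δ, -, hle⟩ := hξ
  have hdiff := hu.sub_const (u t)
  have hφ : HasDerivAt (fun s ↦ ⟪ξ, u s - u t⟫ - δ * ‖u s - u t‖ ^ 2) ⟪ξ, u'⟫ t := by
    have h := ((hasDerivAt_const t ξ).inner ℝ hdiff).sub (hdiff.norm_sq.const_mul δ)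
    simp only [inner_zero_left, add_zero, sub_self, mul_zero, sub_zero] at h
    exact h
  refine IsLocalMax.hasDerivAt_eq_zero ?_ hφ
  have hnear : ∀ᶠ s in 𝓝 t, ‖u s - u t‖ ≤ σ := by
    simpa [dist_eq_norm] using hu.continuousAt.eventually (closedBall_mem_nhds (u t) hσ)
  filter_upwards [hC, hnear] with s hs hsσ
  simpa using hle (u s) hs hsσ

namespace IsSolutionOf

theorem ae_inner_eq_norm_sq (hsol : IsSolutionOf C f x₀ x x') :
    ∀ᵐ t ∂(volume.restrict (Ioi 0)), ⟪f (x t), x' t⟫ = ‖x' t‖ ^ 2 := by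
  filter_upwards [ae_restrict_of_ae_restrict_of_subset Ioi_subset_Ici_self hsol.deriv,
    ae_restrict_of_ae_restrict_of_subset Ioi_subset_Ici_self hsol.incl,
    ae_restrict_mem measurableSet_Ioi] with t hderiv hincl ht
  have hC : ∀ᶠ s in 𝓝 t, x s ∈ C := (eventually_gt_nhds ht).mono fun s hs ↦ hsol.memC s hs.le
  have := inner_eq_zero_of_mem_proxNormalCone hincl hderiv hC
  rwa [inner_sub_left, real_inner_self_eq_norm_sq, sub_eq_zero] at this

theorem intervalIntegrable (hsol : IsSolutionOf C f x₀ x x') {t : ℝ} (ht : 0 ≤ t) :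
    IntervalIntegrable x' volume 0 t :=
  (intervalIntegrable_iff_integrableOn_Icc_of_le ht).2 <|
    (hsol.locInt (t + 1) (by linarith)).mono_set (Icc_subset_Icc le_rfl (by linarith))

theorem absolutelyContinuousOnInterval (hsol : IsSolutionOf C f x₀ x x') {t : ℝ} (ht : 0 ≤ t) :
    AbsolutelyContinuousOnInterval x 0 t :=
  .of_eq_add_intervalIntegral (hsol.intervalIntegrable ht) fun s hs ↦ by
    rw [hsol.init]
    exact hsol.integ s (uIcc_of_le ht ▸ hs).1

theorem aestronglyMeasurable (hsol : IsSolutionOf C f x₀ x x') :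
    AEStronglyMeasurable x' (volume.restrict (Ici 0)) := by
  refine (aecover_Ici_of_Ico (l := atTop) tendsto_id).aestronglyMeasurable fun t ↦ ?_
  rw [Measure.restrict_restrict measurableSet_Ico, inter_eq_left.2 Ico_subset_Ici_self]
  exact (hsol.locInt (max t 1) (by positivity)).aestronglyMeasurable.mono_set
    (Ico_subset_Icc_self.trans (Icc_subset_Icc le_rfl (le_max_left _ _)))

end IsSolutionOf

variable [CompleteSpace E] {V : E → ℝ} {V' : E → E} {k : ℝ≥0}

theorem LipschitzWith.exists_lipschitzOnWith_closedBall_of_hasGradientAt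
    (hV' : LipschitzWith k V') (hV : ∀ y, HasGradientAt V (V' y) y) (z : E) (R : ℝ) :
    ∃ K, LipschitzOnWith K V (closedBall z R) := by
  refine ⟨‖V' z‖₊ + k * R.toNNReal,
    (convex_closedBall z R).lipschitzOnWith_of_nnnorm_hasFDerivWithin_le
      (fun y _ ↦ (hV y).hasFDerivAt.hasFDerivWithinAt) fun y hy ↦ ?_⟩
  rw [← NNReal.coe_le_coe, coe_nnnorm, LinearIsometryEquiv.norm_map]
  push_cast
  calc ‖V' y‖ ≤ ‖V' z‖ + dist (V' y) (V' z) := by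
        rw [dist_eq_norm]; exact norm_le_norm_add_norm_sub' _ _
    _ ≤ ‖V' z‖ + k * dist y z := by gcongr; exact hV'.dist_le_mul y z
    _ ≤ ‖V' z‖ + k * max R 0 := by gcongr; exact (mem_closedBall.1 hy).trans (le_max_left _ _)

theorem AbsolutelyContinuousOnInterval.comp_of_hasGradientAt {a b : ℝ}
    (hx : AbsolutelyContinuousOnInterval x a b) (hV : ∀ y, HasGradientAt V (V' y) y)
    (hV' : LipschitzWith k V') : AbsolutelyContinuousOnInterval (fun t ↦ V (x t)) a b := by
  obtain ⟨R, hR⟩ := hx.exists_bound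
  obtain ⟨K, hK⟩ := hV'.exists_lipschitzOnWith_closedBall_of_hasGradientAt hV 0 R
  exact hK.comp_absolutelyContinuousOnInterval hx fun s hs ↦ mem_closedBall_zero_iff.2 (hR s hs)

theorem IsSolutionOf.ae_hasDerivAt_comp_Ioi (hsol : IsSolutionOf C (fun y ↦ -V' y) x₀ x x')
    (hV : ∀ y, HasGradientAt V (V' y) y) :
    ∀ᵐ t ∂(volume.restrict (Ioi 0)), HasDerivAt (fun s ↦ V (x s)) (-‖x' t‖ ^ 2) t := by
  filter_upwards [ae_restrict_of_ae_restrict_of_subset Ioi_subset_Ici_self hsol.deriv,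
    hsol.ae_inner_eq_norm_sq] with t hderiv hinner
  refine ((hV (x t)).hasFDerivAt.comp_hasDerivAt t hderiv).congr_deriv ?_
  rw [← hinner, inner_neg_left, neg_neg]
  rfl

theorem IsSolutionOf.ae_hasDerivAt_comp_uIoc
    (hsol : IsSolutionOf C (fun y ↦ -V' y) x₀ x x') (hV : ∀ y, HasGradientAt V (V' y) y)
    {t : ℝ} (ht : 0 ≤ t) :
    ∀ᵐ s ∂(volume.restrict (Ι 0 t)), HasDerivAt (fun s ↦ V (x s)) (-‖x' s‖ ^ 2) s := by
  rw [uIoc_of_le ht]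
  exact ae_restrict_of_ae_restrict_of_subset Ioc_subset_Ioi_self (hsol.ae_hasDerivAt_comp_Ioi hV)

theorem IsSolutionOf.intervalIntegrable_norm_sq
    (hsol : IsSolutionOf C (fun y ↦ -V' y) x₀ x x') (hV : ∀ y, HasGradientAt V (V' y) y)
    (hV' : LipschitzWith k V') {t : ℝ} (ht : 0 ≤ t) :
    IntervalIntegrable (fun s ↦ ‖x' s‖ ^ 2) volume 0 t := by
  have hAC := (hsol.absolutelyContinuousOnInterval ht).comp_of_hasGradientAt hV hV'
  simpa [Pi.neg_def] using
    (hAC.intervalIntegrable_of_ae_hasDerivAt (hsol.ae_hasDerivAt_comp_uIoc hV ht)).neg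

theorem IsSolutionOf.energy_eq (hsol : IsSolutionOf C (fun y ↦ -V' y) x₀ x x')
    (hV : ∀ y, HasGradientAt V (V' y) y) (hV' : LipschitzWith k V') {t : ℝ} (ht : 0 ≤ t) :
    V (x t) = V x₀ - ∫ s in 0..t, ‖x' s‖ ^ 2 := by
  have hAC := (hsol.absolutelyContinuousOnInterval ht).comp_of_hasGradientAt hV hV'
  have hFTC := hAC.integral_eq_sub_of_ae_hasDerivAt (hsol.ae_hasDerivAt_comp_uIoc hV ht)
  rw [intervalIntegral.integral_neg, hsol.init] at hFTC
  linarith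

end InnerProductSpace

theorem energy_limit_and_L2_general (C : Set H)
    (V : H → ℝ) (V' : H → H) (hV : ∀ y, HasGradientAt V (V' y) y)
    (k : ℝ≥0) (hV' : LipschitzWith k V')
    (x₀ : H)
    (x x' : ℝ → H) (hsol : IsSolutionOf C (fun y => -V' y) x₀ x x')
    (hbdd : ∃ m : ℝ, ∀ y ∈ C, m ≤ V y) :
    ∃ Vinf : ℝ,
      Tendsto (fun t => V (x t)) Filter.atTop (nhds Vinf) ∧
      MeasureTheory.MemLp x' 2 (volume.restrict (Ici (0 : ℝ))) ∧
      ∫ s in Ici (0 : ℝ), ‖x' s‖ ^ 2 = V x₀ - Vinf := by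
  obtain ⟨m, hm⟩ := hbdd
  have henergy : ∀ t, 0 ≤ t → V (x t) = V x₀ - ∫ s in 0..t, ‖x' s‖ ^ 2 :=
    fun t ht ↦ hsol.energy_eq hV hV' ht
  have hL2 : IntegrableOn (fun s ↦ ‖x' s‖ ^ 2) (Ioi 0) :=
    integrableOn_Ioi_of_intervalIntegral_le (B := V x₀ - m)
      (fun t ht ↦ hsol.intervalIntegrable_norm_sq hV hV' ht) (fun s ↦ by positivity)
      fun t ht ↦ by linarith [henergy t ht, hm _ (hsol.memC t ht)]
  refine ⟨V x₀ - ∫ s in Ioi 0, ‖x' s‖ ^ 2, ?_,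
    (memLp_two_iff_integrable_sq_norm hsol.aestronglyMeasurable).2
      ((integrableOn_Ici_iff_integrableOn_Ioi).2 hL2),
    by rw [integral_Ici_eq_integral_Ioi]; ring⟩
  refine (tendsto_const_nhds.sub
    (intervalIntegral_tendsto_integral_Ioi 0 hL2 tendsto_id)).congr' ?_
  filter_upwards [eventually_ge_atTop 0] with t ht using (henergy t ht).symm

/-- Proposition 3.6 (ii): if `V` is bounded from below on `C`, then
`V_∞ = lim_{t→+∞} V(x(t))` exists, `ẋ ∈ L²([0,∞); H)`, and
`∫₀^∞ ‖ẋ(s)‖² ds = V(x₀) - V_∞`. -/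
theorem energy_limit_and_L2 (C : Set H) (hC : IsClosed C) (hCne : C.Nonempty)
    (r : ℝ) (hr : 0 < r) (hreg : IsProxRegular C r)
    (V : H → ℝ) (V' : H → H) (hV : ∀ y, HasGradientAt V (V' y) y)
    (k : ℝ≥0) (hV' : LipschitzWith k V')
    (x₀ : H) (hx₀ : x₀ ∈ C)
    (x x' : ℝ → H) (hsol : IsSolutionOf C (fun y => -V' y) x₀ x x')
    (hbdd : ∃ m : ℝ, ∀ y ∈ C, m ≤ V y) :
    ∃ Vinf : ℝ,
      Tendsto (fun t => V (x t)) Filter.atTop (nhds Vinf) ∧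
      MeasureTheory.MemLp x' 2 (volume.restrict (Ici (0 : ℝ))) ∧
      ∫ s in Ici (0 : ℝ), ‖x' s‖ ^ 2 = V x₀ - Vinf :=
  energy_limit_and_L2_general C V V' hV k hV' x₀ x x' hsol hbdd
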